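/- arXiv:2604.09520 — 3 statements merged into one kernel-verified Lean document; each statement's English description precedes it below -/
import Mathlib

section
/- For d odd with d < n, the edge-expansion of the distance-d Hamming graph satisfies h(Q_n^d) ≥ C(n,d)/(2n). -/
/-!
`Q_n^d` is the Cayley graph of `(ℤ/2)^n` with respect to the set `S` of vectors of weight `d`, and
the edges leaving `U` in direction `s` number `escapeCount U s = #{x ∈ U | x + s ∉ U}`. This count
is subadditive in `s`, and its sum over the whole group is `|U| (2^n - |U|) ≥ 2^n |U| / 2`. For odd
`d < n` every vector is a sum of at most `n` elements of `S`. Averaging the subadditivity bound over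
the coordinate permutations, which act transitively on `S`, spreads this cost evenly over `S`, and
yields `C(n,d) |U| ≤ 2 n |∂U|`.
-/

open Finset

def Qnd (n d : ℕ) : SimpleGraph (Fin n → Bool) where
  Adj x y := x ≠ y ∧ hammingDist x y = d
  symm := by
    refine ⟨fun x y h => ?_⟩
    exact ⟨h.1.symm, by rw [hammingDist_comm]; exact h.2⟩
  loopless := by refine ⟨fun x h => ?_⟩; exact h.1 rfl

instance (n d : ℕ) : DecidableRel (Qnd n d).Adj := fun x y =>
  inferInstanceAs (Decidable (x ≠ y ∧ hammingDist x y = d))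

open scoped symmDiff Pointwise

section Sums

variable {G : Type*} [AddMonoid G]

def IsSumOfAtMost (S : Set G) (m : ℕ) (g : G) : Prop :=
  ∃ l : List G, (∀ z ∈ l, z ∈ S) ∧ l.sum = g ∧ l.length ≤ m

namespace IsSumOfAtMost

variable {S : Set G} {m k : ℕ} {g h : G}

lemma zero (m : ℕ) : IsSumOfAtMost S m 0 := ⟨[], by simp, rfl, by simp⟩

lemma of_mem (hg : g ∈ S) : IsSumOfAtMost S 1 g := ⟨[g], by simpa using hg, by simp, le_rfl⟩

lemma mono (hg : IsSumOfAtMost S m g) (hmk : m ≤ k) : IsSumOfAtMost S k g :=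
  let ⟨l, hlS, hl, hlen⟩ := hg
  ⟨l, hlS, hl, hlen.trans hmk⟩

lemma add (hg : IsSumOfAtMost S m g) (hh : IsSumOfAtMost S k h) :
    IsSumOfAtMost S (m + k) (g + h) := by
  obtain ⟨l, hlS, rfl, hl⟩ := hg
  obtain ⟨l', hl'S, rfl, hl'⟩ := hh
  refine ⟨l ++ l', fun z hz => ?_, List.sum_append, by simp; omega⟩
  rcases List.mem_append.mp hz with hz | hz
  exacts [hlS z hz, hl'S z hz]

end IsSumOfAtMost

end Sums

section EscapeCount

variable {G : Type*} [AddGroup G] [DecidableEq G] (U : Finset G)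

def escapeCount (g : G) : ℕ := #{x ∈ U | x + g ∉ U}

@[simp] lemma escapeCount_zero : escapeCount U 0 = 0 := by
  simp [escapeCount]

lemma escapeCount_add_le (g h : G) :
    escapeCount U (g + h) ≤ escapeCount U g + escapeCount U h := by
  have hsub : {x ∈ U | x + (g + h) ∉ U} ⊆
      {x ∈ U | x + g ∉ U} ∪ {y ∈ U | y + h ∉ U}.image (· + -g) := by
    intro x hx
    simp only [mem_filter, mem_union, mem_image, ← add_assoc] at hx ⊢
    by_cases hxg : x + g ∈ U
    · exact Or.inr ⟨x + g, ⟨hxg, hx.2⟩, add_neg_cancel_right x g⟩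
    · exact Or.inl ⟨hx.1, hxg⟩
  calc escapeCount U (g + h) ≤ _ := card_le_card hsub
    _ ≤ _ := card_union_le _ _
    _ ≤ escapeCount U g + escapeCount U h := add_le_add le_rfl card_image_le

variable [Fintype G]

lemma sum_escapeCount : ∑ g, escapeCount U g = #U * (Fintype.card G - #U) := by
  have hfiber : ∀ x : G, #{g | x + g ∉ U} = Fintype.card G - #U := by
    intro x
    rw [← card_compl, ← card_map (Equiv.addLeft x).toEmbedding]
    congr 1
    ext y
    simp [Equiv.addLeft]
  calc ∑ g, escapeCount U g = ∑ x ∈ U, #{g | x + g ∉ U} := by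
        simp only [escapeCount, card_filter]
        exact sum_comm
    _ = #U * (Fintype.card G - #U) := by simp [hfiber]

lemma card_boundary_eq_sum_escapeCount (S : Finset G) :
    #{q : G × G | -q.1 + q.2 ∈ S ∧ q.1 ∈ U ∧ q.2 ∉ U} = ∑ s ∈ S, escapeCount U s := by
  simp only [escapeCount]
  rw [← card_sigma]
  refine card_nbij' (fun q => ⟨-q.1 + q.2, q.1⟩) (fun p => (p.2, p.2 + p.1)) ?_ ?_ ?_ ?_
  · intro q hq
    simpa using hq
  · rintro ⟨s, x⟩ hp
    simpa using hp
  · intro q _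
    simp
  · rintro ⟨s, x⟩ _
    simp

end EscapeCount

lemma card_mul_sum_smul_eq_card_mul_sum {Γ α : Type*} [Group Γ] [Fintype Γ] [MulAction Γ α]
    {S : Finset α} (hS : ∀ γ : Γ, ∀ s ∈ S, γ • s ∈ S)
    (htrans : ∀ s ∈ S, ∀ t ∈ S, ∃ γ : Γ, γ • s = t) (f : α → ℕ) {z : α} (hz : z ∈ S) :
    #S * ∑ γ : Γ, f (γ • z) = Fintype.card Γ * ∑ s ∈ S, f s := by
  have hconst : ∀ s ∈ S, ∑ γ : Γ, f (γ • s) = ∑ γ : Γ, f (γ • z) := by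
    intro s hs
    obtain ⟨γ₀, rfl⟩ := htrans z hz s hs
    simp_rw [smul_smul]
    exact Fintype.sum_equiv (Equiv.mulRight γ₀) _ _ fun _ => rfl
  have hperm : ∀ γ : Γ, ∑ s ∈ S, f (γ • s) = ∑ s ∈ S, f s := fun γ =>
    sum_nbij' (γ • ·) (γ⁻¹ • ·) (hS γ) (hS γ⁻¹) (fun _ _ => inv_smul_smul γ _)
      (fun _ _ => smul_inv_smul γ _) fun _ _ => rfl
  calc #S * ∑ γ : Γ, f (γ • z) = ∑ s ∈ S, ∑ γ : Γ, f (γ • s) := by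
        rw [sum_congr rfl hconst, sum_const, smul_eq_mul]
    _ = ∑ γ : Γ, ∑ s ∈ S, f (γ • s) := sum_comm
    _ = Fintype.card Γ * ∑ s ∈ S, f s := by
        rw [Fintype.sum_congr _ _ hperm, sum_const, card_univ, smul_eq_mul]

section Congestion

variable {G Γ : Type*} [AddGroup G] [DecidableEq G] [Fintype G]
  [Group Γ] [Fintype Γ] [DistribMulAction Γ G]
  (U S : Finset G) (L : ℕ)

theorem card_mul_sum_escapeCount_le
    (hS : ∀ γ : Γ, ∀ s ∈ S, γ • s ∈ S) (htrans : ∀ s ∈ S, ∀ t ∈ S, ∃ γ : Γ, γ • s = t)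
    (hgen : ∀ g : G, IsSumOfAtMost (S : Set G) L g) :
    #S * ∑ g, escapeCount U g ≤ L * Fintype.card G * ∑ s ∈ S, escapeCount U s := by
  set B := ∑ s ∈ S, escapeCount U s
  -- averaging over `Γ` keeps `escapeCount U` subadditive and makes it constant on `S`
  let T : G → ℕ := fun g => ∑ γ : Γ, escapeCount U (γ • g)
  have hT_add : ∀ g h, T (g + h) ≤ T g + T h := fun g h => by
    simp only [T, smul_add, ← sum_add_distrib]
    exact sum_le_sum fun γ _ => escapeCount_add_le U _ _
  have hT_le : ∀ g, #S * T g ≤ L * (Fintype.card Γ * B) := by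
    intro g
    obtain ⟨l, hlS, rfl, hlen⟩ := hgen g
    calc #S * T l.sum ≤ #S * (l.map T).sum :=
          Nat.mul_le_mul_left _ (l.le_sum_of_subadditive T (by simp [T]) hT_add)
      _ = l.length * (Fintype.card Γ * B) := by
          rw [← List.sum_map_mul_left, List.map_congr_left fun z hz =>
            card_mul_sum_smul_eq_card_mul_sum hS htrans (escapeCount U) (hlS z hz)]
          simp [B]
      _ ≤ L * (Fintype.card Γ * B) := Nat.mul_le_mul_right _ hlen
  have hT_sum : ∑ g, T g = Fintype.card Γ * ∑ g, escapeCount U g := by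
    rw [sum_comm, ← smul_eq_mul, ← card_univ, ← sum_const]
    exact Fintype.sum_congr _ _ fun γ =>
      Fintype.sum_bijective _ (MulAction.bijective γ) _ _ fun _ => rfl
  have key : Fintype.card Γ * (#S * ∑ g, escapeCount U g) ≤
      Fintype.card Γ * (L * Fintype.card G * B) :=
    calc Fintype.card Γ * (#S * ∑ g, escapeCount U g) = ∑ g, #S * T g := by
          rw [← mul_sum, hT_sum]
          ring
      _ ≤ ∑ _g : G, L * (Fintype.card Γ * B) := sum_le_sum fun g _ => hT_le g
      _ = Fintype.card Γ * (L * Fintype.card G * B) := by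
          rw [sum_const, card_univ, smul_eq_mul]
          ring
  exact Nat.le_of_mul_le_mul_left key Fintype.card_pos

theorem card_mul_card_le_two_mul_sum_escapeCount
    (hS : ∀ γ : Γ, ∀ s ∈ S, γ • s ∈ S) (htrans : ∀ s ∈ S, ∀ t ∈ S, ∃ γ : Γ, γ • s = t)
    (hgen : ∀ g : G, IsSumOfAtMost (S : Set G) L g) (hU : 2 * #U ≤ Fintype.card G) :
    #S * #U ≤ 2 * L * ∑ s ∈ S, escapeCount U s := by
  have hhalf : Fintype.card G * #U ≤ 2 * ∑ g, escapeCount U g :=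
    calc Fintype.card G * #U ≤ 2 * (Fintype.card G - #U) * #U :=
          Nat.mul_le_mul_right _ (by omega)
      _ = 2 * ∑ g, escapeCount U g := by
          rw [sum_escapeCount]
          ring
  have key : Fintype.card G * (#S * #U) ≤
      Fintype.card G * (2 * L * ∑ s ∈ S, escapeCount U s) :=
    calc Fintype.card G * (#S * #U) = #S * (Fintype.card G * #U) := by ring
      _ ≤ #S * (2 * ∑ g, escapeCount U g) := Nat.mul_le_mul_left _ hhalf
      _ = 2 * (#S * ∑ g, escapeCount U g) := by ring
      _ ≤ 2 * (L * Fintype.card G * ∑ s ∈ S, escapeCount U s) :=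
          Nat.mul_le_mul_left _ (card_mul_sum_escapeCount_le U S L hS htrans hgen)
      _ = Fintype.card G * (2 * L * ∑ s ∈ S, escapeCount U s) := by ring
  exact Nat.le_of_mul_le_mul_left key Fintype.card_pos

end Congestion

instance {M : Type*} [Fintype M] : Fintype Mᵈᵐᵃ := Fintype.ofEquiv M DomMulAct.mk

lemma hammingNorm_domSMul {ι β : Type*} [Fintype ι] [Zero β] [DecidableEq β]
    (γ : (Equiv.Perm ι)ᵈᵐᵃ) (z : ι → β) : hammingNorm (γ • z) = hammingNorm z := by
  simp only [hammingNorm, DomMulAct.smul_apply]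
  exact card_equiv (DomMulAct.mk.symm γ) (by simp)

section Hypercube

variable {ι : Type*} [DecidableEq ι]

def charVec (A : Finset ι) : ι → Bool := fun i => decide (i ∈ A)

lemma charVec_symmDiff (A B : Finset ι) : charVec (A ∆ B) = charVec A + charVec B := by
  funext i
  by_cases hA : i ∈ A <;> by_cases hB : i ∈ B <;>
    simp [charVec, Bool.add_eq_xor, mem_symmDiff, hA, hB]

lemma domSMul_charVec (σ : Equiv.Perm ι) (A : Finset ι) :
    DomMulAct.mk σ⁻¹ • charVec A = charVec (σ • A) := by
  funext i
  simp only [charVec, DomMulAct.smul_apply, Equiv.symm_apply_apply, inv_smul_mem_iff]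

variable [Fintype ι]

@[simp] lemma hammingNorm_charVec (A : Finset ι) : hammingNorm (charVec A) = #A := by
  simp [hammingNorm, charVec, Bool.zero_eq_false]

lemma charVec_support (g : ι → Bool) : charVec ({i | g i = true} : Finset ι) = g := by
  funext i
  simp [charVec]

lemma exists_domSMul_eq {z z' : ι → Bool} (h : hammingNorm z = hammingNorm z') :
    ∃ γ : (Equiv.Perm ι)ᵈᵐᵃ, γ • z = z' := by
  rw [← charVec_support z, ← charVec_support z'] at h ⊢
  rw [hammingNorm_charVec, hammingNorm_charVec] at h
  set A : Finset ι := {i | z i = true}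
  set A' : Finset ι := {i | z' i = true}
  obtain ⟨σ, hσ⟩ := (Set.powersetCard.isPretransitive (α := ι) (n := #A)).exists_smul_eq
    ⟨A, Set.powersetCard.mem_iff.mpr rfl⟩ ⟨A', Set.powersetCard.mem_iff.mpr h.symm⟩
  have hσA : σ • A = A' := congrArg Subtype.val hσ
  exact ⟨DomMulAct.mk σ⁻¹, by rw [domSMul_charVec, hσA]⟩

variable (ι) in
def hammingSphere (d : ℕ) : Finset (ι → Bool) := {z | hammingNorm z = d}

variable {d : ℕ}

@[simp] lemma mem_hammingSphere {z : ι → Bool} : z ∈ hammingSphere ι d ↔ hammingNorm z = d := by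
  simp [hammingSphere]

lemma card_hammingSphere : #(hammingSphere ι d) = (Fintype.card ι).choose d := by
  rw [← card_univ, ← card_powersetCard]
  refine (card_nbij' charVec (fun g => ({i | g i = true} : Finset ι)) ?_ ?_ ?_ ?_).symm
  · intro A hA
    simpa using hA
  · intro g hg
    simpa [charVec_support, mem_hammingSphere.mp hg] using
      (hammingNorm_charVec {i | g i = true}).symm
  · intro A _
    ext
    simp [charVec]
  · intro g _
    exact charVec_support g

lemma isSumOfAtMost_two_charVec_pair (hd : 1 ≤ d) (hdn : d < Fintype.card ι) {i j : ι}
    (hij : i ≠ j) : IsSumOfAtMost (hammingSphere ι d : Set (ι → Bool)) 2 (charVec {i, j}) := by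
  -- `Z` contains `i` but not `j`, so `Z ∆ {i, j}` trades `i` for `j`
  obtain ⟨Z, hiZ, hZj, hZ⟩ := exists_subsuperset_card_eq (s := {i}) (t := {j}ᶜ)
    (by simpa using hij.symm) (by simpa using hd) (by rw [card_compl, card_singleton]; omega)
  have hi : i ∈ Z := hiZ (mem_singleton_self i)
  have hj : j ∉ Z := fun h => by simpa using hZj h
  have hZ' : #(Z ∆ {i, j}) = d := by
    have : Z ∆ {i, j} = insert j (Z.erase i) := by
      ext a
      by_cases hai : a = i <;> by_cases haj : a = j <;> simp_all [mem_symmDiff]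
    rw [this, card_insert_of_notMem (by simp [hj]), card_erase_of_mem hi, hZ]
    omega
  rw [← symmDiff_symmDiff_cancel_left Z {i, j}, charVec_symmDiff]
  exact (IsSumOfAtMost.of_mem (by simpa using hZ)).add (IsSumOfAtMost.of_mem (by simpa using hZ'))

lemma isSumOfAtMost_charVec_of_card_eq_two_mul (hd : 1 ≤ d) (hdn : d < Fintype.card ι) (k : ℕ) :
    ∀ A : Finset ι, #A = 2 * k →
      IsSumOfAtMost (hammingSphere ι d : Set (ι → Bool)) (2 * k) (charVec A) := by
  induction k with
  | zero =>
    intro A hA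
    rw [card_eq_zero.mp hA]
    exact IsSumOfAtMost.zero 0
  | succ k ih =>
    intro A hA
    obtain ⟨i, hi, j, hj, hij⟩ := one_lt_card.mp (by omega : 1 < #A)
    have hijA : {i, j} ⊆ A := insert_subset hi (singleton_subset_iff.mpr hj)
    have hrest : #({i, j} ∆ A) = 2 * k := by
      rw [symmDiff_of_le hijA, card_sdiff_of_subset hijA, card_pair hij]
      omega
    rw [← symmDiff_symmDiff_cancel_left {i, j} A, charVec_symmDiff]
    exact ((isSumOfAtMost_two_charVec_pair hd hdn hij).add (ih _ hrest)).mono (by omega)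

lemma isSumOfAtMost_hammingSphere (hd : Odd d) (hdn : d < Fintype.card ι) (g : ι → Bool) :
    IsSumOfAtMost (hammingSphere ι d : Set (ι → Bool)) (Fintype.card ι) g := by
  rw [← charVec_support g]
  set A : Finset ι := {i | g i = true}
  have hA : #A ≤ Fintype.card ι := card_le_univ A
  rcases Nat.even_or_odd #A with ⟨k, hk⟩ | hAodd
  · exact (isSumOfAtMost_charVec_of_card_eq_two_mul hd.pos hdn k A (by omega)).mono (by omega)
  -- for odd `#A`, one element of the sphere nested with `A` leaves an even remainder
  suffices ∃ Z : Finset ι, #Z = d ∧ Even #(Z ∆ A) ∧ #(Z ∆ A) < Fintype.card ι by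
    obtain ⟨Z, hZ, ⟨k, hk⟩, hlt⟩ := this
    rw [← symmDiff_symmDiff_cancel_left Z A, charVec_symmDiff]
    exact ((IsSumOfAtMost.of_mem (by simpa using hZ)).add
      (isSumOfAtMost_charVec_of_card_eq_two_mul hd.pos hdn k _ (by omega))).mono (by omega)
  rcases le_total d #A with hdA | hAd
  · obtain ⟨Z, hZA, hZ⟩ := exists_subset_card_eq hdA
    refine ⟨Z, hZ, ?_, ?_⟩ <;> rw [symmDiff_of_le hZA, card_sdiff_of_subset hZA, hZ]
    · exact Nat.Odd.sub_odd hAodd hd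
    · have := hd.pos
      omega
  · obtain ⟨Z, hAZ, hZ⟩ := exists_superset_card_eq hAd (by simpa using hdn.le)
    refine ⟨Z, hZ, ?_, ?_⟩ <;> rw [symmDiff_of_ge hAZ, card_sdiff_of_subset hAZ, hZ]
    · exact Nat.Odd.sub_odd hd hAodd
    · omega

lemma choose_mul_card_le_two_mul_sum_escapeCount (hd : Odd d) (hdn : d < Fintype.card ι)
    (U : Finset (ι → Bool)) (hU : 2 * #U ≤ 2 ^ Fintype.card ι) :
    (Fintype.card ι).choose d * #U ≤
      2 * Fintype.card ι * ∑ s ∈ hammingSphere ι d, escapeCount U s := by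
  rw [← card_hammingSphere]
  exact card_mul_card_le_two_mul_sum_escapeCount (Γ := (Equiv.Perm ι)ᵈᵐᵃ) U _ _
    (fun γ s hs => by simpa [hammingNorm_domSMul] using hs)
    (fun s hs t ht =>
      exists_domSMul_eq ((mem_hammingSphere.mp hs).trans (mem_hammingSphere.mp ht).symm))
    (isSumOfAtMost_hammingSphere hd hdn) (by simpa using hU)

end Hypercube

lemma qnd_adj_iff {n d : ℕ} (hd : d ≠ 0) {x y : Fin n → Bool} :
    (Qnd n d).Adj x y ↔ -x + y ∈ hammingSphere (Fin n) d := by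
  rw [mem_hammingSphere, ← hammingDist_eq_hammingNorm]
  refine ⟨And.right, fun h => ⟨?_, h⟩⟩
  rintro rfl
  exact hd (by simpa using h.symm)

/-- For odd `d < n`, the edge-expansion of `Q_n^d` is at least `C(n,d)/(2n)`:
every set `U` of at most half the vertices has edge-boundary of size at least
`C(n,d)/(2n) · |U|`. -/
theorem stmt_7 (n d : ℕ) (hd : Odd d) (hdn : d < n)
    (U : Finset (Fin n → Bool)) (hU : U.Nonempty) (hU2 : 2 * U.card ≤ 2 ^ n) :
    ((n.choose d : ℝ)) / (2 * n) ≤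
      ((univ.filter (fun q : (Fin n → Bool) × (Fin n → Bool) =>
          (Qnd n d).Adj q.1 q.2 ∧ q.1 ∈ U ∧ q.2 ∉ U)).card : ℝ) / U.card := by
  have hn : 0 < n := hd.pos.trans hdn
  have hkey := choose_mul_card_le_two_mul_sum_escapeCount hd (by simpa using hdn) U
    (by simpa using hU2)
  rw [Fintype.card_fin] at hkey
  have hboundary :
      #{q : (Fin n → Bool) × (Fin n → Bool) | (Qnd n d).Adj q.1 q.2 ∧ q.1 ∈ U ∧ q.2 ∉ U} =
        ∑ s ∈ hammingSphere (Fin n) d, escapeCount U s := by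
    simp_rw [qnd_adj_iff hd.pos.ne']
    exact card_boundary_eq_sum_escapeCount U _
  rw [hboundary, div_le_div_iff₀ (by positivity) (by exact_mod_cast hU.card_pos)]
  have hkeyℝ : (n.choose d * #U : ℝ) ≤ 2 * n * ∑ s ∈ hammingSphere (Fin n) d, escapeCount U s := by
    exact_mod_cast hkey
  linarith
end

section
/- Let V ⊆ {0,1}^n, let π_d : {0,1}^n → {0,1}^{n−d} be the projection onto the first n−d coordinates, W = π_d(V), and let G, H be the graphs of conv(V) and conv(W) respectively. Then for every A ⊆ V, |∂_G(A)| ≥ |∂_H(π_d(A))|. -/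
open Finset

def lin {m : ℕ} (a : Fin m → ℝ) (x : Fin m → Bool) : ℝ :=
  ∑ i, a i * (if x i then 1 else 0)

def IsPolytopeEdge {m : ℕ} (V : Set (Fin m → Bool)) (u v : Fin m → Bool) : Prop :=
  u ∈ V ∧ v ∈ V ∧ ∃ (a : Fin m → ℝ) (b : ℝ),
    lin a u = b ∧ lin a v = b ∧ ∀ w ∈ V, w ≠ u → w ≠ v → lin a w < b

/-- The number of edges of the graph of `conv(V)` with exactly one endpoint in `A`
(each such edge counted once, oriented from `A` to its complement). -/
noncomputable def edgeBd {m : ℕ} (V A : Set (Fin m → Bool)) : ℕ :=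
  Set.ncard {q : (Fin m → Bool) × (Fin m → Bool) |
    q.1 ∈ A ∧ q.2 ∉ A ∧ IsPolytopeEdge V q.1 q.2}

/-- Projection onto the first `n − d` coordinates. -/
def proj (n d : ℕ) (x : Fin n → Bool) : Fin (n - d) → Bool :=
  fun i => x (Fin.castLE (Nat.sub_le n d) i)

/-!
The argument is the simplex method on the cube. If a vertex `u` of a 0/1-polytope does not
maximise a linear functional `l`, then it has a neighbour `v` with `l u < l v`: tilt `l` by a
multiple of the functional `x ↦ -dist(u, x)` until `u` lies on the optimal face, and take for
`v` the vertex of that face nearest to `u` in Hamming distance.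

Now let `u'v'` be an edge of `conv(π(V))` leaving `π(A)` and `u ∈ A` with `π u = u'`. The
preimage of the edge is a face of `conv(V)` containing `u`, and running the simplex step inside
it towards `v'` yields an edge `uv` of `conv(V)` with `π v = v'`, hence `v ∉ A`. The map
`(u, v) ↦ (π u, π v)` thus sends the boundary of `A` onto that of `π(A)`.
-/

open Filter Function

variable {k m : ℕ}

lemma lin_add (a g : Fin m → ℝ) (x : Fin m → Bool) : lin (a + g) x = lin a x + lin g x := by
  simp only [lin, Pi.add_apply, add_mul, Finset.sum_add_distrib]

lemma lin_smul (r : ℝ) (a : Fin m → ℝ) (x : Fin m → Bool) :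
    lin (r • a) x = r * lin a x := by
  simp only [lin, Pi.smul_apply, smul_eq_mul, Finset.mul_sum, mul_assoc]

lemma lin_extend {e : Fin k → Fin m} (he : Injective e) (a : Fin k → ℝ) (x : Fin m → Bool) :
    lin (extend e a 0) x = lin a (x ∘ e) :=
  (Fintype.sum_of_injective e he _ _
    (fun i hi => by simp [extend_apply' _ _ _ (by simpa using hi)])
    (fun i => by simp [he.extend_apply])).symm

def signs (u : Fin m → Bool) : Fin m → ℝ := fun i => if u i then 1 else -1

lemma lin_signs (u x : Fin m → Bool) :
    lin (signs u) x = lin (signs u) u - hammingDist u x := by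
  rw [hammingDist, Finset.card_filter, Nat.cast_sum, eq_sub_iff_add_eq, lin, lin,
    ← Finset.sum_add_distrib]
  refine Finset.sum_congr rfl fun i _ => ?_
  rcases hu : u i <;> rcases hx : x i <;> norm_num [signs, hu, hx]

lemma IsPolytopeEdge.of_face {F : Set (Fin m → Bool)} {g : Fin m → ℝ} {c : ℝ}
    (hle : ∀ x ∈ F, lin g x ≤ c) {u v : Fin m → Bool}
    (h : IsPolytopeEdge {x ∈ F | lin g x = c} u v) : IsPolytopeEdge F u v := by
  obtain ⟨⟨huF, hgu⟩, ⟨hvF, hgv⟩, a, b, hau, hav, hlt⟩ := h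
  have hN : ∀ᶠ N : ℝ in atTop, ∀ w, lin g w < c → lin a w - b < N * (c - lin g w) := by
    refine eventually_all.2 fun w => ?_
    by_cases hw : lin g w < c
    · filter_upwards [eventually_gt_atTop ((lin a w - b) / (c - lin g w))] with N hN _
      exact (div_lt_iff₀ (sub_pos.2 hw)).1 hN
    · exact Eventually.of_forall fun _ h => absurd h hw
  obtain ⟨N, hN⟩ := hN.exists
  refine ⟨huF, hvF, a + N • g, b + N * c, ?_, ?_, fun w hw hwu hwv => ?_⟩
  · rw [lin_add, lin_smul, hau, hgu]
  · rw [lin_add, lin_smul, hav, hgv]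
  · rw [lin_add, lin_smul]
    rcases (hle w hw).lt_or_eq with hw' | hw'
    · nlinarith [hN w hw']
    · rw [hw']
      linarith [hlt w ⟨hw, hw'⟩ hwu hwv]

/-- The point of `F \ {u}` nearest to `u` spans an edge with `u`: it maximises
`x ↦ -(dist(u, x) + dist(v, x))`, a linear functional on the cube. -/
lemma exists_isPolytopeEdge_of_ne {F : Set (Fin m → Bool)} {u w : Fin m → Bool} (hu : u ∈ F)
    (hw : w ∈ F) (hwu : w ≠ u) : ∃ v, v ≠ u ∧ IsPolytopeEdge F u v := by
  obtain ⟨v, ⟨hv, hvu⟩, hmin⟩ :=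
    Set.exists_min_image {x ∈ F | x ≠ u} (hammingDist u) (Set.toFinite _) ⟨w, hw, hwu⟩
  refine ⟨v, hvu, hu, hv, signs u + signs v, _, rfl, ?_, fun x hx hxu hxv => ?_⟩
  · rw [lin_add, lin_add, lin_signs v u, lin_signs u v, hammingDist_comm v u]
    ring
  · have h₁ : (hammingDist u v : ℝ) ≤ hammingDist u x := by
      exact_mod_cast hmin x ⟨hx, hxu⟩
    have h₂ : (0 : ℝ) < hammingDist v x := by exact_mod_cast hammingDist_pos.2 (Ne.symm hxv)
    rw [lin_add, lin_add, lin_signs u x, lin_signs v x, lin_signs v u, hammingDist_comm v u]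
    linarith

lemma exists_isPolytopeEdge_lin_lt {F : Set (Fin m → Bool)} {u w : Fin m → Bool} (hu : u ∈ F)
    (hw : w ∈ F) {l : Fin m → ℝ} (hl : lin l u < lin l w) :
    ∃ v, IsPolytopeEdge F u v ∧ lin l u < lin l v := by
  have hwu : w ≠ u := by
    rintro rfl
    exact lt_irrefl _ hl
  have hd : ∀ x, x ≠ u → (0 : ℝ) < hammingDist u x := fun x hx => by
    exact_mod_cast hammingDist_pos.2 (Ne.symm hx)
  obtain ⟨w₁, ⟨hw₁F, hw₁u⟩, hmax⟩ := Set.exists_max_image {x ∈ F | x ≠ u}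
    (fun x => (lin l x - lin l u) / hammingDist u x) (Set.toFinite _) ⟨w, hw, hwu⟩
  set t := (lin l w₁ - lin l u) / hammingDist u w₁ with ht_def
  have ht : 0 < t := (div_pos (sub_pos.2 hl) (hd w hwu)).trans_le (hmax w ⟨hw, hwu⟩)
  -- tilted by the largest slope `t`, `g` is maximised on `F` both at `u` and at `w₁ ≠ u`
  set g := l + t • signs u with hg_def
  have hg : ∀ x, lin g x = lin l x + t * lin (signs u) u - t * hammingDist u x :=
    fun x => by rw [hg_def, lin_add, lin_smul, lin_signs]; ring
  have hle : ∀ x ∈ F, lin g x ≤ lin g u := by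
    intro x hx
    rcases eq_or_ne x u with rfl | hxu
    · rfl
    have := (div_le_iff₀ (hd x hxu)).1 (hmax x ⟨hx, hxu⟩)
    rw [hg, hg, hammingDist_self, Nat.cast_zero]
    linarith
  have hw₁ : lin g w₁ = lin g u := by
    rw [hg, hg, hammingDist_self, Nat.cast_zero, ht_def, div_mul_cancel₀ _ (hd w₁ hw₁u).ne']
    ring
  obtain ⟨v, hvu, hedge⟩ :=
    exists_isPolytopeEdge_of_ne (F := {x ∈ F | lin g x = lin g u}) ⟨hu, rfl⟩ ⟨hw₁F, hw₁⟩
      hw₁u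
  refine ⟨v, hedge.of_face hle, ?_⟩
  have hgv := hedge.2.1.2
  rw [hg, hg, hammingDist_self, Nat.cast_zero] at hgv
  nlinarith [mul_pos ht (hd v hvu)]

lemma IsPolytopeEdge.exists_lift {e : Fin k → Fin m} (he : Injective e)
    {V : Set (Fin m → Bool)} {u : Fin m → Bool} {v' : Fin k → Bool}
    (h : IsPolytopeEdge ((· ∘ e) '' V) (u ∘ e) v')
    (hne : u ∘ e ≠ v') (hu : u ∈ V) : ∃ v, IsPolytopeEdge V u v ∧ v ∘ e = v' := by
  obtain ⟨-, ⟨w, hw, rfl⟩, a, b, hau, haw, hlt⟩ := h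
  have hface : ∀ x ∈ V, lin (extend e a 0) x ≤ b ∧
      (lin (extend e a 0) x = b → x ∘ e = u ∘ e ∨ x ∘ e = w ∘ e) := by
    intro x hx
    rw [lin_extend he]
    by_cases hxu : x ∘ e = u ∘ e
    · exact ⟨(congrArg (lin a) hxu).trans hau |>.le, fun _ => .inl hxu⟩
    by_cases hxw : x ∘ e = w ∘ e
    · exact ⟨(congrArg (lin a) hxw).trans haw |>.le, fun _ => .inr hxw⟩
    have := hlt _ ⟨x, hx, rfl⟩ hxu hxw
    exact ⟨this.le, fun h => absurd h this.ne⟩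
  have hl : lin (extend e (signs (w ∘ e)) 0) u < lin (extend e (signs (w ∘ e)) 0) w := by
    have := hammingDist_pos.2 hne.symm
    rw [lin_extend he, lin_extend he, lin_signs (w ∘ e) (u ∘ e)]
    simpa using this
  obtain ⟨v, hedge, hlv⟩ :=
    exists_isPolytopeEdge_lin_lt (F := {x ∈ V | lin (extend e a 0) x = b})
    ⟨hu, by rw [lin_extend he, hau]⟩ ⟨hw, by rw [lin_extend he, haw]⟩ hl
  refine ⟨v, hedge.of_face fun x hx => (hface x hx).1, ?_⟩
  obtain ⟨hv, hav⟩ := hedge.2.1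
  refine ((hface v hv).2 hav).resolve_left fun hvu => ?_
  rw [lin_extend he, lin_extend he, hvu] at hlv
  exact lt_irrefl _ hlv

theorem edgeBd_image_comp_le {e : Fin k → Fin m} (he : Injective e) {V A : Set (Fin m → Bool)}
    (hA : A ⊆ V) : edgeBd ((· ∘ e) '' V) ((· ∘ e) '' A) ≤ edgeBd V A := by
  refine (Set.ncard_le_ncard ?_ (Set.toFinite _)).trans
    (Set.ncard_image_le (f := Prod.map (· ∘ e) (· ∘ e)) (Set.toFinite _))
  rintro ⟨-, v'⟩ ⟨⟨u, huA, rfl⟩, hv', hedge⟩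
  obtain ⟨v, hv, rfl⟩ := hedge.exists_lift he (fun h => hv' (h ▸ ⟨u, huA, rfl⟩)) (hA huA)
  exact ⟨(u, v), ⟨huA, fun hvA => hv' ⟨v, hvA, rfl⟩, hv⟩, rfl⟩

/-- Lemma 2.11 (projection lemma, Ferber–Krivelevich–Sales–Samotij): for `A ⊆ V`,
the edge-boundary of `A` in the graph of `conv(V)` is at least the edge-boundary of
`π_d(A)` in the graph of `conv(π_d(V))`. -/
theorem stmt_11 (n d : ℕ) (V A : Set (Fin n → Bool)) (hA : A ⊆ V) :
    edgeBd (proj n d '' V) (proj n d '' A) ≤ edgeBd V A :=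
  edgeBd_image_comp_le (Fin.castLE_injective _) hA
end

section
/- Let u,v ∈ {0,1}^n with dist_H(u,v) = d, and let V be p-Bernoulli random. The probability that uv is an edge of the graph of conv(V) is at most (1−p²)^{2^{d−1}−1} ≤ exp(−p²(2^{d−1}−1)). -/
open MeasureTheory ProbabilityTheory ENNReal

noncomputable def randomSubset (n : ℕ) (p : ℝ≥0∞) (hp : p ≤ 1) :
    Measure ((Fin n → Bool) → Bool) :=
  Measure.pi (fun _ => (PMF.bernoulli p.toNNReal
    (by simpa using ENNReal.toNNReal_mono ENNReal.one_ne_top hp)).toMeasure)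

/-! If `uv` is an edge cut out by `lin a · = b`, every other point of `V` lies strictly below `b`,
so no two points `s, t ∈ V \ {u, v}` can have `lin a s + lin a t = lin a u + lin a v`. Every
`s ≠ u` of the half of `cube(u, v)` fixed at a coordinate where `u` and `v` differ gives such a
pair `s, s ⊕ u ⊕ v`, and the `2^{d-1} - 1` pairs obtained this way are pairwise disjoint.
Under the product measure, events depending on disjoint sets of coordinates are independent, so the
probability that no pair lies in `V` is `(1 - p²)^{2^{d-1} - 1}`. The exponential bound is
`1 - q ≤ exp (-q)`. -/

lemma DependsOn.eq_preimage_restrict_image {ι α : Type*} {A : Set (ι → α)} {S : Finset ι}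
    (hA : DependsOn (· ∈ A) (S : Set ι)) : A = S.restrict ⁻¹' (S.restrict '' A) := by
  ext ω
  refine ⟨fun h => ⟨ω, h, rfl⟩, fun ⟨ω', hω', h⟩ => ?_⟩
  exact (eq_iff_iff.1 (hA fun i hi => congrFun h ⟨i, hi⟩)).1 hω'

section ProductMeasure

variable {ι α : Type*} [Fintype ι] [MeasurableSpace α] {ν : ι → Measure α}
  [∀ i, IsProbabilityMeasure (ν i)]

lemma measure_pi_eval_preimage (i : ι) (X : Set α) (hX : MeasurableSet X) :
    Measure.pi ν {ω | ω i ∈ X} = ν i X :=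
  (measurePreserving_eval ν i).measure_preimage hX.nullMeasurableSet

variable [Countable α] [MeasurableSingletonClass α]

lemma measure_pi_inter_of_dependsOn {A B : Set (ι → α)} {S T : Finset ι} (hST : Disjoint S T)
    (hA : DependsOn (· ∈ A) (S : Set ι)) (hB : DependsOn (· ∈ B) (T : Set ι)) :
    Measure.pi ν (A ∩ B) = Measure.pi ν A * Measure.pi ν B := by
  have hindep : IndepFun S.restrict T.restrict (Measure.pi ν) :=
    (iIndepFun_pi (X := fun _ => id) fun _ => aemeasurable_id).indepFun_finset S T hST
      fun i => measurable_pi_apply i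
  rw [hA.eq_preimage_restrict_image, hB.eq_preimage_restrict_image]
  exact hindep.measure_inter_preimage_eq_mul _ _ (Set.to_countable _).measurableSet
    (Set.to_countable _).measurableSet

lemma measure_pi_biInter_of_dependsOn {κ : Type*} (K : Finset κ) {A : κ → Set (ι → α)}
    {B : κ → Finset ι} (hB : (K : Set κ).PairwiseDisjoint B)
    (hA : ∀ k ∈ K, DependsOn (· ∈ A k) (B k : Set ι)) :
    Measure.pi ν (⋂ k ∈ K, A k) = ∏ k ∈ K, Measure.pi ν (A k) := by
  classical
  induction K using Finset.induction_on with
  | empty => simp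
  | insert k K hk ih =>
    have hdisj : Disjoint (B k) (K.biUnion B) := by
      refine (Finset.disjoint_biUnion_right _ _ _).2 fun j hj => hB (by simp) (by simp [hj]) ?_
      rintro rfl; exact hk hj
    have hdep : DependsOn (· ∈ ⋂ j ∈ K, A j) (K.biUnion B : Set ι) := fun ω ω' h => by
      simp only [Set.mem_iInter]
      exact propext <| forall₂_congr fun j (hj : j ∈ K) => eq_iff_iff.1 <| hA j (by simp [hj])
        fun i hi => h i (by simp only [Finset.coe_biUnion]; exact Set.mem_biUnion hj hi)
    rw [Finset.set_biInter_insert, Finset.prod_insert hk,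
      measure_pi_inter_of_dependsOn hdisj (hA k (by simp)) hdep,
      ih (hB.subset (by simp)) fun j hj => hA j (by simp [hj])]

lemma measure_pi_eval_mem_and_eval_mem {a b : ι} (hab : a ≠ b) (X Y : Set α) :
    Measure.pi ν {ω | ω a ∈ X ∧ ω b ∈ Y} = ν a X * ν b Y := by
  classical
  have hdep : ∀ (i : ι) (Z : Set α),
      DependsOn (· ∈ {ω : ι → α | ω i ∈ Z}) (({i} : Finset ι) : Set ι) :=
    fun i Z ω ω' h => by simp only [Set.mem_setOf_eq, h i (by simp)]
  rw [Set.setOf_and, measure_pi_inter_of_dependsOn (by simpa) (hdep a X) (hdep b Y),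
    measure_pi_eval_preimage a X (Set.to_countable X).measurableSet,
    measure_pi_eval_preimage b Y (Set.to_countable Y).measurableSet]

lemma measure_pi_forall_not_mem_and_mem [DecidableEq ι] {κ : Type*} (K : Finset κ)
    {s t : κ → ι} (hst : ∀ k ∈ K, s k ≠ t k)
    (hdisj : (K : Set κ).PairwiseDisjoint fun k => ({s k, t k} : Finset ι)) (X : Set α) :
    Measure.pi ν {ω | ∀ k ∈ K, ¬(ω (s k) ∈ X ∧ ω (t k) ∈ X)}
      = ∏ k ∈ K, (1 - ν (s k) X * ν (t k) X) := by
  have hinter : {ω : ι → α | ∀ k ∈ K, ¬(ω (s k) ∈ X ∧ ω (t k) ∈ X)}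
      = ⋂ k ∈ K, {ω | ω (s k) ∈ X ∧ ω (t k) ∈ X}ᶜ := by
    ext; simp
  rw [hinter, measure_pi_biInter_of_dependsOn K hdisj fun k _ ω ω' h => by
    simp only [Set.mem_compl_iff, Set.mem_setOf_eq, h (s k) (by simp), h (t k) (by simp)]]
  refine Finset.prod_congr rfl fun k hk => ?_
  rw [prob_compl_eq_one_sub (Set.to_countable _).measurableSet,
    measure_pi_eval_mem_and_eval_mem (hst k hk)]

end ProductMeasure

lemma one_sub_pow_le_exp_neg_mul {q : ℝ} (hq : q ≤ 1) (N : ℕ) :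
    (1 - q) ^ N ≤ Real.exp (-(q * N)) := by
  calc (1 - q) ^ N ≤ Real.exp (-q) ^ N :=
        pow_le_pow_left₀ (by linarith) (Real.one_sub_le_exp_neg q) N
    _ = Real.exp (-(q * N)) := by rw [← Real.exp_nat_mul]; ring_nf

lemma bernoulli_toMeasure_true {p : NNReal} (hp : p ≤ 1) :
    (PMF.bernoulli p hp).toMeasure {true} = p := by
  rw [PMF.toMeasure_apply_singleton _ _ (measurableSet_singleton true), PMF.bernoulli_apply,
    cond_true]

lemma randomSubset_forall_not_and {n : ℕ} {p : ℝ≥0∞} (hp : p ≤ 1) {κ : Type*}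
    (K : Finset κ) {s t : κ → Fin n → Bool} (hst : ∀ k ∈ K, s k ≠ t k)
    (hdisj : (K : Set κ).PairwiseDisjoint fun k => ({s k, t k} : Finset _)) :
    randomSubset n p hp {ω | ∀ k ∈ K, ¬(ω (s k) = true ∧ ω (t k) = true)}
      = (1 - p * p) ^ K.card := by
  have hp' : p.toNNReal ≤ 1 := by simpa using ENNReal.toNNReal_mono ENNReal.one_ne_top hp
  have hν : (PMF.bernoulli p.toNNReal hp').toMeasure {true} = p := by
    rw [bernoulli_toMeasure_true, ENNReal.coe_toNNReal (ne_top_of_le_ne_top one_ne_top hp)]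
  have := measure_pi_forall_not_mem_and_mem
    (ν := fun _ => (PMF.bernoulli p.toNNReal hp').toMeasure) K hst hdisj {true}
  simp only [Set.mem_singleton_iff, hν, Finset.prod_const] at this
  exact this

section Cube

variable {ι : Type*} {u v x y : ι → Bool}

def cubeReflection (u v x : ι → Bool) : ι → Bool := fun i => x i ^^ (u i ^^ v i)

lemma cubeReflection_involutive : Function.Involutive (cubeReflection u v) :=
  fun x => funext fun i => by simp [cubeReflection]

lemma cubeReflection_left : cubeReflection u v u = v :=
  funext fun i => by simp [cubeReflection]

lemma lin_add_lin_cubeReflection {m : ℕ} {u v x : Fin m → Bool}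
    (hx : ∀ i, u i = v i → x i = u i) (a : Fin m → ℝ) :
    lin a x + lin a (cubeReflection u v x) = lin a u + lin a v := by
  simp only [lin, ← Finset.sum_add_distrib, ← mul_add]
  refine Finset.sum_congr rfl fun i _ => ?_
  have hxi := hx i
  simp only [cubeReflection]
  by_cases hu : u i <;> by_cases hv : v i <;> by_cases hxi' : x i <;>
    simp [hu, hv, hxi'] at hxi ⊢

variable [Fintype ι] [DecidableEq ι]

def halfCube (u v : ι → Bool) (i₀ : ι) : Finset (ι → Bool) :=
  Fintype.piFinset fun i =>
    if i ∈ ({j | u j ≠ v j} : Finset ι).erase i₀ then Finset.univ else {u i}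

lemma card_halfCube {i₀ : ι} (h : u i₀ ≠ v i₀) :
    (halfCube u v i₀).card = 2 ^ (hammingDist u v - 1) := by
  have hi₀ : i₀ ∈ ({j | u j ≠ v j} : Finset ι) := by simpa using h
  calc (halfCube u v i₀).card
      = ∏ i, if i ∈ ({j | u j ≠ v j} : Finset ι).erase i₀ then 2 else 1 := by
        rw [halfCube, Fintype.card_piFinset]
        exact Finset.prod_congr rfl fun i _ => by split_ifs <;> simp
    _ = 2 ^ (hammingDist u v - 1) := by
        rw [Finset.prod_ite_mem, Finset.univ_inter, Finset.prod_const,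
          Finset.card_erase_of_mem hi₀]
        rfl

lemma mem_halfCube_iff {i₀ : ι} :
    x ∈ halfCube u v i₀ ↔ ∀ i, (u i ≠ v i → i = i₀) → x i = u i := by
  simp only [halfCube, Fintype.mem_piFinset]
  refine forall_congr' fun i => ?_
  split_ifs with hi <;>
    simp only [Finset.mem_erase, Finset.mem_filter, Finset.mem_univ, true_and] at hi <;>
    simp <;> tauto

lemma apply_eq_of_mem_halfCube {i₀ : ι} (hx : x ∈ halfCube u v i₀) {i : ι}
    (hi : u i = v i) : x i = u i :=
  mem_halfCube_iff.1 hx i fun h => absurd hi h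

lemma cubeReflection_ne_of_mem_halfCube {i₀ : ι} (h : u i₀ ≠ v i₀)
    (hx : x ∈ halfCube u v i₀) (hy : y ∈ halfCube u v i₀) : cubeReflection u v x ≠ y := by
  intro hxy
  have hxi := mem_halfCube_iff.1 hx i₀ fun _ => rfl
  have hyi := mem_halfCube_iff.1 hy i₀ fun _ => rfl
  have := congrFun hxy i₀
  simp only [cubeReflection, hxi, hyi] at this
  cases hu : u i₀ <;> cases hv : v i₀ <;> simp_all

lemma pairwiseDisjoint_pair_cubeReflection {i₀ : ι} (h : u i₀ ≠ v i₀) :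
    (halfCube u v i₀ : Set (ι → Bool)).PairwiseDisjoint
      fun x => ({x, cubeReflection u v x} : Finset (ι → Bool)) := by
  intro x hx y hy hxy
  simp only [Finset.disjoint_insert_left, Finset.disjoint_insert_right, Finset.disjoint_singleton,
    Finset.mem_insert, Finset.mem_singleton, not_or]
  exact ⟨⟨hxy.symm, (cubeReflection_ne_of_mem_halfCube h hx hy).symm⟩,
    (cubeReflection_ne_of_mem_halfCube h hy hx).symm, cubeReflection_involutive.injective.ne hxy⟩

end Cube

lemma not_isPolytopeEdge_of_lin_add_eq {m : ℕ} {V : Set (Fin m → Bool)}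
    {u v s t : Fin m → Bool} (hs : s ∈ V) (ht : t ∈ V) (hsu : s ≠ u) (hsv : s ≠ v)
    (htu : t ≠ u) (htv : t ≠ v)
    (hlin : ∀ a, lin a s + lin a t = lin a u + lin a v) : ¬IsPolytopeEdge V u v := by
  rintro ⟨-, -, a, b, hau, hav, hlt⟩
  linarith [hlt s hs hsu hsv, hlt t ht htu htv, hlin a]

lemma not_isPolytopeEdge_of_mem_halfCube {m : ℕ} {V : Set (Fin m → Bool)}
    {u v x : Fin m → Bool} {i₀ : Fin m} (h : u i₀ ≠ v i₀)
    (hx : x ∈ (halfCube u v i₀).erase u) (hxV : x ∈ V) (hrV : cubeReflection u v x ∈ V) :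
    ¬IsPolytopeEdge V u v := by
  obtain ⟨hxu, hx⟩ := Finset.mem_erase.1 hx
  have hu : u ∈ halfCube u v i₀ := mem_halfCube_iff.2 fun _ _ => rfl
  refine not_isPolytopeEdge_of_lin_add_eq hxV hrV hxu ?_
    (cubeReflection_ne_of_mem_halfCube h hx hu) ?_
    (lin_add_lin_cubeReflection fun i => apply_eq_of_mem_halfCube hx)
  · rw [← cubeReflection_left (u := u) (v := v)]
    exact (cubeReflection_ne_of_mem_halfCube h hu hx).symm
  · simpa only [cubeReflection_left] using
      (cubeReflection_involutive (u := u) (v := v)).injective.ne hxu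

/-- If `dist_H(u,v) = d` and `V` is `p`-Bernoulli random, then the probability that `uv`
is an edge of the graph of `conv(V)` is at most `(1 − p²)^{2^{d−1} − 1}`, which is at most
`exp(−p²(2^{d−1} − 1))`. -/
theorem stmt_15 (n d : ℕ) (hd : 1 ≤ d) (p : ℝ) (hp0 : 0 ≤ p) (hp1 : p ≤ 1)
    (u v : Fin n → Bool) (huv : hammingDist u v = d) :
    randomSubset n (ENNReal.ofReal p) (ENNReal.ofReal_le_one.mpr hp1)
        {ω | IsPolytopeEdge {x | ω x = true} u v}
      ≤ ENNReal.ofReal ((1 - p ^ 2) ^ (2 ^ (d - 1) - 1)) ∧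
    (1 - p ^ 2) ^ (2 ^ (d - 1) - 1) ≤ Real.exp (-(p ^ 2 * (2 ^ (d - 1) - 1))) := by
  refine ⟨?_, ?_⟩
  · obtain ⟨i₀, hi₀⟩ : ∃ i, u i ≠ v i := by
      by_contra! h
      rw [funext h, hammingDist_self] at huv
      omega
    set P := (halfCube u v i₀).erase u
    have hcard : P.card = 2 ^ (d - 1) - 1 := by
      rw [Finset.card_erase_of_mem (mem_halfCube_iff.2 fun _ _ => rfl), card_halfCube hi₀, huv]
    calc _ ≤ randomSubset n _ _
          {ω | ∀ x ∈ P, ¬(ω x = true ∧ ω (cubeReflection u v x) = true)} :=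
          measure_mono fun ω hω x hx hpair =>
            not_isPolytopeEdge_of_mem_halfCube hi₀ hx hpair.1 hpair.2 hω
      _ = (1 - ENNReal.ofReal p * ENNReal.ofReal p) ^ P.card :=
          randomSubset_forall_not_and _ P (s := id)
            (fun x hx => (cubeReflection_ne_of_mem_halfCube hi₀ (Finset.mem_of_mem_erase hx)
              (Finset.mem_of_mem_erase hx)).symm)
            ((pairwiseDisjoint_pair_cubeReflection hi₀).subset
              (Finset.coe_subset.2 (Finset.erase_subset _ _)))
      _ = ENNReal.ofReal ((1 - p ^ 2) ^ (2 ^ (d - 1) - 1)) := by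
          rw [hcard, ← ENNReal.ofReal_mul hp0, ← ENNReal.ofReal_one,
            ← ENNReal.ofReal_sub _ (by positivity), ← ENNReal.ofReal_pow (by nlinarith), sq]
  · have := one_sub_pow_le_exp_neg_mul (pow_le_one₀ (n := 2) hp0 hp1) (2 ^ (d - 1) - 1)
    rwa [Nat.cast_sub Nat.one_le_two_pow, Nat.cast_pow, Nat.cast_two, Nat.cast_one] at this
end
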